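/- Fix μ0, μ1 > 0 and real numbers d0, d1, and define H(ω) := e^{−ω}·(ω − μ0·(ω² + d0))·(ω − μ1·(ω² + d1)) − e^{ω}·(ω + μ0·(ω² + d0))·(ω + μ1·(ω² + d1)). For every ω > 0, the boundary value problem X''(x) = ω²·X(x) on [0,1], X'(0) = μ0·(ω² + d0)·X(0), X'(1) = −μ1·(ω² + d1)·X(1) admits a solution X ∈ C²([0,1],ℝ) that is not identically zero if and only if H(ω) = 0. -/

import Mathlib

/-!
Every solution of `X'' = ω² X` with `ω ≠ 0` is a combination `A e^{ωx} + B e^{-ωx}`, because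
`e^{-ωx} (X' + ω X)` and `e^{ωx} (X' - ω X)` are first integrals. The two boundary conditions are
then a homogeneous linear system in `(A, B)`, whose determinant is `-H(ω)`; a nontrivial solution
exists iff this determinant vanishes, and then `(A, B) = (ω + m, ω - m)` with `m = μ0 (ω² + d0)`
solves it.
-/

open Real Set

noncomputable def expCombination (ω A B x : ℝ) : ℝ := A * exp (ω * x) + B * exp (-(ω * x))

@[simp]
theorem expCombination_zero (ω A B : ℝ) : expCombination ω A B 0 = A + B := by
  simp [expCombination]

theorem hasDerivAt_expCombination (ω A B x : ℝ) :
    HasDerivAt (expCombination ω A B) (ω * expCombination ω A (-B) x) x := by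
  have hlin : HasDerivAt (fun y => ω * y) ω x := hasDerivAt_const_mul ω
  exact ((hlin.exp.const_mul A).add (hlin.neg.exp.const_mul B)).congr_deriv
    (by simp only [expCombination, Pi.neg_apply]; ring)

theorem deriv_expCombination (ω A B : ℝ) :
    deriv (expCombination ω A B) = fun x => ω * expCombination ω A (-B) x :=
  funext fun x => (hasDerivAt_expCombination ω A B x).deriv

theorem deriv_deriv_expCombination (ω A B : ℝ) :
    deriv (deriv (expCombination ω A B)) = fun x => ω ^ 2 * expCombination ω A B x := by
  funext x
  rw [deriv_expCombination, deriv_const_mul_field', deriv_expCombination, neg_neg]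
  ring

theorem contDiff_expCombination (ω A B : ℝ) {n : WithTop ℕ∞} :
    ContDiff ℝ n (expCombination ω A B) := by
  unfold expCombination
  fun_prop

section FirstIntegral

variable {X : ℝ → ℝ} {ω a b : ℝ}

theorem exp_neg_mul_mul_deriv_add_eq_of_deriv_deriv_eq (hX : Differentiable ℝ X)
    (hX' : Differentiable ℝ (deriv X)) (hode : ∀ x ∈ Icc a b, deriv (deriv X) x = ω ^ 2 * X x)
    {x : ℝ} (hx : x ∈ Icc a b) :
    exp (-(ω * x)) * (deriv X x + ω * X x) = exp (-(ω * a)) * (deriv X a + ω * X a) := by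
  have hderiv : ∀ y ∈ Ico a b,
      HasDerivWithinAt (fun y => exp (-(ω * y)) * (deriv X y + ω * X y)) 0 (Ici y) y := by
    intro y hy
    have hlin : HasDerivAt (fun y => -(ω * y)) (-ω) y := (hasDerivAt_const_mul ω).neg
    refine (hlin.exp.mul ((hX' y).hasDerivAt.add ((hX y).hasDerivAt.const_mul ω))).congr_deriv
      ?_ |>.hasDerivWithinAt
    simp only [Pi.add_apply, hode y (Ico_subset_Icc_self hy)]
    ring
  have hcont : Continuous fun y => exp (-(ω * y)) * (deriv X y + ω * X y) := by
    have := hX.continuous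
    have := hX'.continuous
    fun_prop
  exact constant_of_has_deriv_right_zero hcont.continuousOn hderiv x hx

theorem exists_eqOn_expCombination (hω : ω ≠ 0) (hX : Differentiable ℝ X)
    (hX' : Differentiable ℝ (deriv X)) (hode : ∀ x ∈ Icc a b, deriv (deriv X) x = ω ^ 2 * X x) :
    ∃ A B : ℝ, EqOn X (expCombination ω A B) (Icc a b) ∧
      EqOn (deriv X) (deriv (expCombination ω A B)) (Icc a b) := by
  have hexp : ∀ x, exp (ω * x) * exp (-(ω * x)) = 1 := fun x => by
    rw [← exp_add, add_neg_cancel, exp_zero]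
  obtain ⟨p, hp⟩ : ∃ p, ∀ x ∈ Icc a b, deriv X x + ω * X x = p * exp (ω * x) :=
    ⟨exp (-(ω * a)) * (deriv X a + ω * X a), fun x hx => by
      linear_combination exp (ω * x) * exp_neg_mul_mul_deriv_add_eq_of_deriv_deriv_eq hX hX' hode hx
        - (deriv X x + ω * X x) * hexp x⟩
  obtain ⟨q, hq⟩ : ∃ q, ∀ x ∈ Icc a b, deriv X x - ω * X x = q * exp (-(ω * x)) :=
    ⟨exp (ω * a) * (deriv X a - ω * X a), fun x hx => by
      have := exp_neg_mul_mul_deriv_add_eq_of_deriv_deriv_eq (ω := -ω) hX hX' (by simpa using hode) hx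
      simp only [neg_mul, neg_neg, ← sub_eq_add_neg] at this
      linear_combination exp (-(ω * x)) * this - (deriv X x - ω * X x) * hexp x⟩
  refine ⟨p / (2 * ω), -q / (2 * ω), fun x hx => ?_, fun x hx => ?_⟩ <;>
    simp only [deriv_expCombination, expCombination] <;> field_simp
  · linear_combination hp x hx - hq x hx
  · linear_combination hp x hx + hq x hx

end FirstIntegral

noncomputable def characteristicFunction (ω m n : ℝ) : ℝ :=
  exp (-ω) * (ω - m) * (ω - n) - exp ω * (ω + m) * (ω + n)

theorem characteristicFunction_eq_zero_of_deriv_expCombination_eq {ω m n A B : ℝ}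
    (h0 : deriv (expCombination ω A B) 0 = m * expCombination ω A B 0)
    (h1 : deriv (expCombination ω A B) 1 = -n * expCombination ω A B 1)
    (hAB : A ≠ 0 ∨ B ≠ 0) : characteristicFunction ω m n = 0 := by
  simp only [deriv_expCombination, expCombination, mul_zero, mul_one, neg_zero, exp_zero]
    at h0 h1
  have hA : characteristicFunction ω m n * A = 0 := by
    unfold characteristicFunction; linear_combination (ω - n) * exp (-ω) * h0 - (ω + m) * h1
  have hB : characteristicFunction ω m n * B = 0 := by
    unfold characteristicFunction; linear_combination (ω + n) * exp ω * h0 - (ω - m) * h1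
  rcases hAB with hA0 | hB0
  · exact (mul_eq_zero.mp hA).resolve_right hA0
  · exact (mul_eq_zero.mp hB).resolve_right hB0

theorem deriv_expCombination_eq_of_characteristicFunction_eq_zero {ω m n : ℝ} (h : characteristicFunction ω m n = 0) :
    deriv (expCombination ω (ω + m) (ω - m)) 0 = m * expCombination ω (ω + m) (ω - m) 0 ∧
      deriv (expCombination ω (ω + m) (ω - m)) 1 = -n * expCombination ω (ω + m) (ω - m) 1 := by
  simp only [deriv_expCombination, expCombination, mul_zero, mul_one, neg_zero, exp_zero]
  unfold characteristicFunction at h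
  constructor
  · ring
  · linear_combination -h

theorem positive_eigenvalue_characteristic_equation_general
    (μ0 μ1 d0 d1 : ℝ) (ω : ℝ) (hω : 0 < ω) :
    (∃ X : ℝ → ℝ, ContDiff ℝ 2 X ∧
        (∀ x ∈ Icc (0:ℝ) 1, deriv (deriv X) x = ω^2 * X x) ∧
        deriv X 0 = μ0 * (ω^2 + d0) * X 0 ∧
        deriv X 1 = -μ1 * (ω^2 + d1) * X 1 ∧
        (∃ x ∈ Icc (0:ℝ) 1, X x ≠ 0)) ↔
      Real.exp (-ω) * (ω - μ0*(ω^2 + d0)) * (ω - μ1*(ω^2 + d1))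
        - Real.exp ω * (ω + μ0*(ω^2 + d0)) * (ω + μ1*(ω^2 + d1)) = 0 := by
  change _ ↔ characteristicFunction ω (μ0 * (ω ^ 2 + d0)) (μ1 * (ω ^ 2 + d1)) = 0
  have h0 : (0 : ℝ) ∈ Icc (0 : ℝ) 1 := left_mem_Icc.2 zero_le_one
  have h1 : (1 : ℝ) ∈ Icc (0 : ℝ) 1 := right_mem_Icc.2 zero_le_one
  constructor
  · rintro ⟨X, hX, hode, hbc0, hbc1, x₀, hx₀, hXx₀⟩
    obtain ⟨A, B, hXeq, hX'eq⟩ := exists_eqOn_expCombination hω.ne'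
      (hX.differentiable two_ne_zero) hX.differentiable_deriv_two hode
    refine characteristicFunction_eq_zero_of_deriv_expCombination_eq (A := A) (B := B) ?_ ?_ ?_
    · rw [← hXeq h0, ← hX'eq h0, hbc0]
    · rw [← hXeq h1, ← hX'eq h1, hbc1, neg_mul]
    · contrapose! hXx₀
      simp [hXeq hx₀, hXx₀, expCombination]
  · intro hH
    obtain ⟨hbc0, hbc1⟩ := deriv_expCombination_eq_of_characteristicFunction_eq_zero hH
    refine ⟨_, contDiff_expCombination .., fun x _ => by rw [deriv_deriv_expCombination], hbc0,
      by rw [hbc1]; ring, 0, h0, ?_⟩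
    rw [expCombination_zero, add_add_sub_cancel]
    positivity

/-- For ω > 0, the BVP X'' = ω²X on [0,1] with
X'(0) = μ0(ω²+d0)X(0), X'(1) = -μ1(ω²+d1)X(1) has a nontrivial C² solution
iff H(ω) = 0. -/
theorem positive_eigenvalue_characteristic_equation
    (μ0 μ1 d0 d1 : ℝ) (hμ0 : 0 < μ0) (hμ1 : 0 < μ1) (ω : ℝ) (hω : 0 < ω) :
    (∃ X : ℝ → ℝ, ContDiff ℝ 2 X ∧
        (∀ x ∈ Icc (0:ℝ) 1, deriv (deriv X) x = ω^2 * X x) ∧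
        deriv X 0 = μ0 * (ω^2 + d0) * X 0 ∧
        deriv X 1 = -μ1 * (ω^2 + d1) * X 1 ∧
        (∃ x ∈ Icc (0:ℝ) 1, X x ≠ 0)) ↔
      Real.exp (-ω) * (ω - μ0*(ω^2 + d0)) * (ω - μ1*(ω^2 + d1))
        - Real.exp ω * (ω + μ0*(ω^2 + d0)) * (ω + μ1*(ω^2 + d1)) = 0 :=
  positive_eigenvalue_characteristic_equation_general μ0 μ1 d0 d1 ω hω
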